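/- Let n ≥ 1 be a natural number and let p ∈ MvPolynomial (Fin n) ℝ be harmonic (Δp = 0). If MvPolynomial.eval x p = 0 for every x : Fin n → ℝ with ∑ i, (x i)^2 = 1, then p = 0. -/

import Mathlib

/-!
If `p` vanishes on the unit sphere, divide it by `‖x‖² - 1`, which is monic of degree `2` in the
first variable: over each point `x'` of the open unit ball the remainder has degree `≤ 1` and the
two roots `±√(1 - ‖x'‖²)`, so it vanishes and `p = (‖x‖² - 1) q`. If `q ≠ 0` has top homogeneous
component `h` of degree `d`, the top component `‖x‖² h` of `p` is harmonic, that is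
`(2n + 4d) h + ‖x‖² Δh = 0`. Then `h = ‖x‖² h₁` with `h₁` homogeneous of degree `d - 2`
satisfying an equation of the same shape with a larger positive constant, and descent on the
degree gives `h = 0`.
-/

namespace MvPolynomial

variable {σ R : Type*} [CommSemiring R]

section Fintype

variable [Fintype σ]

noncomputable def laplacian : MvPolynomial σ R →ₗ[R] MvPolynomial σ R :=
  ∑ i, (pderiv i).toLinearMap ∘ₗ (pderiv i).toLinearMap

theorem laplacian_apply (φ : MvPolynomial σ R) :
    laplacian φ = ∑ i, pderiv i (pderiv i φ) := by
  simp [laplacian]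

variable (σ R) in
noncomputable def sumSq : MvPolynomial σ R := ∑ i, X i ^ 2

theorem isHomogeneous_sumSq : (sumSq σ R).IsHomogeneous 2 :=
  IsHomogeneous.sum _ _ _ fun i _ => isHomogeneous_X_pow i 2

theorem eval_sumSq (x : σ → R) : eval x (sumSq σ R) = ∑ i, x i ^ 2 := by
  simp [sumSq]

theorem sumSq_ne_zero [Nonempty σ] [Nontrivial R] : sumSq σ R ≠ 0 := by
  classical
  obtain ⟨i⟩ := ‹Nonempty σ›
  intro h
  have := congrArg (coeff (Finsupp.single i 2)) h
  simp [sumSq, coeff_sum, X_pow_eq_monomial, coeff_monomial, Finsupp.single_left_inj] at this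

theorem pderiv_sumSq (i : σ) : pderiv i (sumSq σ R) = 2 * X i := by
  classical
  simp only [sumSq, map_sum, pderiv_pow, pderiv_X, Pi.single_apply]
  rw [Finset.sum_eq_single i] <;> simp +contextual [eq_comm]

theorem laplacian_sumSq_mul (φ : MvPolynomial σ R) :
    laplacian (sumSq σ R * φ) =
      2 * Fintype.card σ * φ + 4 * ∑ i, X i * pderiv i φ + sumSq σ R * laplacian φ := by
  have h : ∀ i, pderiv i (pderiv i (sumSq σ R * φ)) =
      2 * φ + 4 * (X i * pderiv i φ) + sumSq σ R * pderiv i (pderiv i φ) := by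
    intro i
    have h2 : pderiv i (2 : MvPolynomial σ R) = 0 := mod_cast (pderiv i).map_natCast 2
    simp only [pderiv_mul, map_add, pderiv_sumSq, pderiv_X_self, h2]
    ring
  simp only [laplacian_apply, h, Finset.sum_add_distrib, ← Finset.mul_sum, Finset.sum_const,
    Finset.card_univ, nsmul_eq_mul]
  ring

theorem IsHomogeneous.laplacian_sumSq_mul {φ : MvPolynomial σ R} {n : ℕ}
    (hφ : φ.IsHomogeneous n) :
    laplacian (sumSq σ R * φ) =
      ((2 * Fintype.card σ + 4 * n : ℕ) : MvPolynomial σ R) * φ + sumSq σ R * laplacian φ := by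
  rw [MvPolynomial.laplacian_sumSq_mul, hφ.sum_X_mul_pderiv, nsmul_eq_mul]
  push_cast
  ring

theorem IsHomogeneous.laplacian {φ : MvPolynomial σ R} {n : ℕ} (hφ : φ.IsHomogeneous n) :
    (laplacian φ).IsHomogeneous (n - 2) := by
  rw [laplacian_apply]
  exact IsHomogeneous.sum _ _ _ fun i _ => by
    simpa [Nat.sub_sub] using hφ.pderiv.pderiv (i := i)

theorem IsHomogeneous.laplacian_eq_zero {φ : MvPolynomial σ R} {n : ℕ} (hφ : φ.IsHomogeneous n)
    (hn : n < 2) : MvPolynomial.laplacian φ = 0 := by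
  rw [laplacian_apply]
  refine Finset.sum_eq_zero fun i _ => ?_
  obtain ⟨a, ha⟩ : ∃ a, pderiv i φ = C a :=
    ⟨_, totalDegree_eq_zero_iff_eq_C.mp <| by
      have := (hφ.pderiv (i := i)).totalDegree_le; omega⟩
  rw [ha, pderiv_C]

end Fintype

theorem finSuccEquiv_sumSq (m : ℕ) :
    finSuccEquiv R m (sumSq (Fin (m + 1)) R) =
      Polynomial.X ^ 2 + Polynomial.C (sumSq (Fin m) R) := by
  simp [sumSq, Fin.sum_univ_succ, finSuccEquiv_X_zero, finSuccEquiv_X_succ, Polynomial.C_pow]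

theorem homogeneousComponent_pderiv (k : ℕ) (i : σ) (φ : MvPolynomial σ R) :
    homogeneousComponent k (pderiv i φ) = pderiv i (homogeneousComponent (k + 1) φ) := by
  ext m
  simp [coeff_pderiv, coeff_homogeneousComponent, map_add, Finsupp.degree_single]

theorem homogeneousComponent_laplacian [Fintype σ] (k : ℕ) (φ : MvPolynomial σ R) :
    homogeneousComponent k (laplacian φ) = laplacian (homogeneousComponent (k + 2) φ) := by
  simp only [laplacian_apply, map_sum, homogeneousComponent_pderiv]

attribute [local instance] MvPolynomial.gradedAlgebra in
theorem IsHomogeneous.homogeneousComponent_mul {ψ : MvPolynomial σ R} {j : ℕ}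
    (hψ : ψ.IsHomogeneous j) (k : ℕ) (φ : MvPolynomial σ R) :
    homogeneousComponent (k + j) (ψ * φ) = ψ * homogeneousComponent k φ := by
  classical
  have := DirectSum.coe_decompose_mul_of_left_mem (homogeneousSubmodule σ R) (k + j) (b := φ) hψ
  rw [if_pos (Nat.le_add_left j k), Nat.add_sub_cancel] at this
  rwa [← decomposition.decompose'_apply, ← decomposition.decompose'_apply]

theorem homogeneousComponent_totalDegree_ne_zero {φ : MvPolynomial σ R} (hφ : φ ≠ 0) :
    homogeneousComponent φ.totalDegree φ ≠ 0 := by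
  obtain ⟨m, hm, hdeg⟩ :=
    Finset.exists_mem_eq_sup φ.support (support_nonempty.mpr hφ) fun m => m.sum fun _ e => e
  have hmdeg : m.degree = φ.totalDegree := hdeg.symm
  intro h
  have := congrArg (coeff m) h
  rw [coeff_homogeneousComponent, if_pos hmdeg] at this
  exact mem_support_iff.mp hm this

section Field

variable {K : Type*} [Field K] [CharZero K] [Fintype σ] [Nonempty σ]

theorem IsHomogeneous.eq_zero_of_natCast_mul_add_sumSq_mul_laplacian_eq_zero
    {φ : MvPolynomial σ K} {n c : ℕ} (hφ : φ.IsHomogeneous n) (hc : 0 < c)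
    (h : (c : MvPolynomial σ K) * φ + sumSq σ K * MvPolynomial.laplacian φ = 0) : φ = 0 := by
  induction n using Nat.strong_induction_on generalizing c φ with
  | _ n ih =>
  have hc₀ : (c : K) ≠ 0 := Nat.cast_ne_zero.mpr hc.ne'
  rcases lt_or_ge n 2 with hn | hn
  · rw [hφ.laplacian_eq_zero hn, mul_zero, add_zero] at h
    exact (mul_eq_zero.mp h).resolve_left (by exact_mod_cast hc₀)
  obtain ⟨m, rfl⟩ := Nat.exists_eq_add_of_le' hn
  set ψ := -(C (c : K)⁻¹ * MvPolynomial.laplacian φ)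
  have hψ : ψ.IsHomogeneous m := by
    simpa using ((isHomogeneous_C σ (c : K)⁻¹).mul hφ.laplacian).neg
  have hφψ : φ = sumSq σ K * ψ := by
    have hinv : (C (c : K)⁻¹ : MvPolynomial σ K) * c = 1 := by
      rw [← map_natCast C, ← map_mul, inv_mul_cancel₀ hc₀, map_one]
    linear_combination C (c : K)⁻¹ * h - φ * hinv
  have hψ_eq : ((c + (2 * Fintype.card σ + 4 * m) : ℕ) : MvPolynomial σ K) * ψ +
      sumSq σ K * MvPolynomial.laplacian ψ = 0 := by
    refine (mul_eq_zero.mp ?_).resolve_left sumSq_ne_zero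
    rw [hφψ, hψ.laplacian_sumSq_mul] at h
    push_cast at h ⊢
    linear_combination h
  rw [hφψ, ih m (by omega) hψ (by omega) hψ_eq, mul_zero]

theorem IsHomogeneous.eq_zero_of_laplacian_sumSq_mul_eq_zero {φ : MvPolynomial σ K} {n : ℕ}
    (hφ : φ.IsHomogeneous n) (h : MvPolynomial.laplacian (sumSq σ K * φ) = 0) : φ = 0 := by
  rw [hφ.laplacian_sumSq_mul] at h
  exact hφ.eq_zero_of_natCast_mul_add_sumSq_mul_laplacian_eq_zero
    (by have := Fintype.card_pos (α := σ); omega) h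

end Field

theorem eq_zero_of_eval_eq_zero_of_isOpen {𝕜 : Type*} [NontriviallyNormedField 𝕜] [Fintype σ]
    {p : MvPolynomial σ 𝕜} {U : Set (σ → 𝕜)} (hU : IsOpen U) (hne : U.Nonempty)
    (h : ∀ x ∈ U, eval x p = 0) : p = 0 := by
  obtain ⟨z, hz⟩ := hne
  obtain ⟨ε, hε, hball⟩ := Metric.isOpen_iff.mp hU z hz
  refine funext_set (fun i => Metric.ball (z i) ε)
    (fun i => infinite_of_mem_nhds (z i) (Metric.ball_mem_nhds _ hε)) fun x hx => ?_
  rw [← ball_pi z hε] at hx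
  simpa using h x (hball hx)

theorem sumSq_sub_one_dvd_of_eval_eq_zero {m : ℕ} {p : MvPolynomial (Fin (m + 1)) ℝ}
    (hp : ∀ x : Fin (m + 1) → ℝ, ∑ i, x i ^ 2 = 1 → eval x p = 0) :
    sumSq (Fin (m + 1)) ℝ - 1 ∣ p := by
  set e := finSuccEquiv ℝ m
  have hS : e (sumSq (Fin (m + 1)) ℝ - 1) =
      Polynomial.X ^ 2 + Polynomial.C (sumSq (Fin m) ℝ - 1) := by
    rw [map_sub, map_one, finSuccEquiv_sumSq, Polynomial.C_sub, Polynomial.C_1, add_sub_assoc]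
  set S := e (sumSq (Fin (m + 1)) ℝ - 1)
  have hS_monic : S.Monic := hS ▸ Polynomial.monic_X_pow_add_C _ two_ne_zero
  have hS_deg : S.natDegree = 2 := by rw [hS, Polynomial.natDegree_X_pow_add_C]
  rw [← map_dvd_iff e, ← Polynomial.modByMonic_eq_zero_iff_dvd hS_monic]
  set r := e p %ₘ S
  have hr_deg : r.natDegree < 2 :=
    hS_deg ▸ Polynomial.natDegree_modByMonic_lt _ hS_monic (by rintro h; simp [h] at hS_deg)
  have hr_ball : ∀ x' : Fin m → ℝ, ∑ i, x' i ^ 2 < 1 → r.map (eval x') = 0 := by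
    intro x' hx'
    have hroot : ∀ y : ℝ, y ^ 2 = 1 - ∑ i, x' i ^ 2 → (r.map (eval x')).eval y = 0 := by
      intro y hy
      have hsphere : ∑ i, (Fin.cons y x' : Fin (m + 1) → ℝ) i ^ 2 = 1 := by
        rw [Fin.sum_univ_succ]; simp only [Fin.cons_zero, Fin.cons_succ]; linarith
      have hSy : eval (Fin.cons y x') (sumSq (Fin (m + 1)) ℝ - 1) = 0 := by
        rw [map_sub, map_one, eval_sumSq, hsphere, sub_self]
      rw [show r = e p - S * (e p /ₘ S) from Polynomial.modByMonic_eq_sub_mul_div _ _,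
        Polynomial.map_sub, Polynomial.map_mul, Polynomial.eval_sub, Polynomial.eval_mul,
        ← eval_eq_eval_mv_eval', ← eval_eq_eval_mv_eval', hp _ hsphere, hSy, zero_mul, sub_zero]
    set t := √(1 - ∑ i, x' i ^ 2)
    have ht : 0 < t := Real.sqrt_pos.mpr (by linarith)
    have ht2 : t ^ 2 = 1 - ∑ i, x' i ^ 2 := Real.sq_sqrt (by linarith)
    refine Polynomial.eq_zero_of_natDegree_lt_card_of_eval_eq_zero' _ {t, -t} ?_ ?_
    · simp only [Finset.mem_insert, Finset.mem_singleton]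
      rintro y (rfl | rfl)
      · exact hroot _ ht2
      · exact hroot _ (by rw [neg_sq, ht2])
    · rw [Finset.card_pair (by linarith)]
      exact Polynomial.natDegree_map_le.trans_lt hr_deg
  ext i : 1
  refine eq_zero_of_eval_eq_zero_of_isOpen (U := {x' | ∑ i, x' i ^ 2 < 1})
    (isOpen_lt (by fun_prop) continuous_const) ⟨0, by simp⟩ fun x' hx' => ?_
  rw [← Polynomial.coeff_map, hr_ball x' hx', Polynomial.coeff_zero]

end MvPolynomial

open MvPolynomial

/-- A harmonic polynomial vanishing on the unit sphere is zero. -/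
theorem harmonic_eq_zero_of_vanishes_on_sphere (n : ℕ) (hn : 1 ≤ n)
    (p : MvPolynomial (Fin n) ℝ)
    (hharm : (∑ i, pderiv i (pderiv i p)) = 0)
    (hvanish : ∀ x : Fin n → ℝ, (∑ i, x i ^ 2) = 1 → MvPolynomial.eval x p = 0) :
    p = 0 := by
  obtain ⟨m, rfl⟩ : ∃ m, n = m + 1 := ⟨n - 1, by omega⟩
  obtain ⟨q, rfl⟩ := sumSq_sub_one_dvd_of_eval_eq_zero hvanish
  suffices q = 0 by rw [this, mul_zero]
  by_contra hq
  set h := homogeneousComponent q.totalDegree q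
  have htop :
      homogeneousComponent (q.totalDegree + 2) ((sumSq _ ℝ - 1) * q) = sumSq _ ℝ * h := by
    rw [sub_mul, one_mul, map_sub, isHomogeneous_sumSq.homogeneousComponent_mul,
      homogeneousComponent_eq_zero (q.totalDegree + 2) q (by omega), sub_zero]
  have htop_harmonic : laplacian (sumSq _ ℝ * h) = 0 := by
    rw [← htop, ← homogeneousComponent_laplacian, laplacian_apply, hharm, map_zero]
  exact homogeneousComponent_totalDegree_ne_zero hq
    ((homogeneousComponent_isHomogeneous _ q).eq_zero_of_laplacian_sumSq_mul_eq_zero htop_harmonic)
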